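/- Let α > 0 and C > 0. If the heat trace satisfies θ(t) = C·t^{−α} + o(t^{−α}) as t → 0⁺, then the counting function satisfies N(λ) = (C/Γ(α+1))·λ^α + o(λ^α) as λ → ∞. -/

import Mathlib

/-!
Karamata's method. Write `x_j(t) = exp (-t λ_j)`. Since `θ (r t) ~ C r^(-α) t^(-α)` for every
`r > 0`, the hypothesis gives
`t^α Σ_j x_j(t) k(x_j(t)) → (C / Γ(α)) ∫₀^∞ e^(-y) k(e^(-y)) y^(α-1) dy`
for every polynomial `k` (for `k = X^i` this is the scaling `r = i + 1`). As `λ` is bounded below,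
all `x_j(t)` with `t ≤ 1` lie in a fixed compact interval, so Weierstrass approximation extends
this to every continuous `k`. Finally `N(1/t) = Σ_j 1[x_j(t) ≥ e⁻¹]`, and squeezing this indicator
between continuous ramps of the form `x k(x)`, whose integrals approach `∫₀^1 y^(α-1) dy = 1/α`,
gives `t^α N(1/t) → C / (α Γ(α)) = C / Γ(α+1)`.
-/

open Filter Topology Set MeasureTheory Real Polynomial

namespace Karamata

lemma tendsto_of_forall_exists_approx {ι : Type*} {F : Filter ι} {f : ι → ℝ} {a : ℝ}
    (h : ∀ ε > 0, ∃ g : ι → ℝ, ∃ b, Tendsto g F (𝓝 b) ∧ |b - a| ≤ ε ∧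
      ∀ᶠ i in F, |f i - g i| ≤ ε) :
    Tendsto f F (𝓝 a) := by
  refine Metric.tendsto_nhds.2 fun ε hε => ?_
  obtain ⟨g, b, hg, hba, hfg⟩ := h (ε / 3) (by positivity)
  filter_upwards [hfg, Metric.tendsto_nhds.1 hg (ε / 3) (by positivity)] with i hfgi hgi
  rw [Real.dist_eq] at hgi ⊢
  rw [abs_le] at hba hfgi
  rw [abs_lt] at hgi ⊢
  constructor <;> linarith

lemma tendsto_rpow_mul_of_isLittleO {f : ℝ → ℝ} {α C : ℝ}
    (h : (fun t => f t - C * t ^ (-α)) =o[𝓝[>] 0] fun t => t ^ (-α)) :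
    Tendsto (fun t => t ^ α * f t) (𝓝[>] 0) (𝓝 C) := by
  rw [← tendsto_sub_nhds_zero_iff]
  refine h.tendsto_div_nhds_zero.congr' ?_
  filter_upwards [self_mem_nhdsWithin] with t (ht : 0 < t)
  rw [rpow_neg ht.le]
  field_simp

lemma tendsto_rpow_mul_comp_const_mul {f : ℝ → ℝ} {α C r : ℝ}
    (hf : Tendsto (fun t => t ^ α * f t) (𝓝[>] 0) (𝓝 C)) (hr : 0 < r) :
    Tendsto (fun t => t ^ α * f (r * t)) (𝓝[>] 0) (𝓝 (C / r ^ α)) := by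
  have hmul : Tendsto (r * ·) (𝓝[>] (0 : ℝ)) (𝓝[>] 0) :=
    tendsto_iff_comap.2 (comap_mulLeft_nhdsGT_zero hr).ge
  refine ((hf.comp hmul).div_const (r ^ α)).congr' ?_
  filter_upwards [self_mem_nhdsWithin] with t (ht : 0 < t)
  have : 0 < r ^ α := rpow_pos_of_pos hr α
  simp only [Function.comp_apply, mul_rpow hr.le ht.le]
  field_simp

lemma isLittleO_sub_mul_rpow_of_tendsto {N : ℝ → ℝ} {α L : ℝ}
    (h : Tendsto (fun x => x ^ (-α) * N x) atTop (𝓝 L)) :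
    (fun x => N x - L * x ^ α) =o[atTop] fun x => x ^ α := by
  refine (Asymptotics.isLittleO_iff_tendsto' ?_).2 ?_
  · filter_upwards [eventually_gt_atTop 0] with x hx h0
    exact absurd h0 (rpow_pos_of_pos hx α).ne'
  · rw [← sub_self L]
    refine (h.sub_const L).congr' ?_
    filter_upwards [eventually_gt_atTop 0] with x hx
    have : 0 < x ^ α := rpow_pos_of_pos hx α
    rw [rpow_neg hx.le]
    field_simp

noncomputable def heatSum (l : ℕ → ℝ) (k : ℝ → ℝ) (t : ℝ) : ℝ :=
  ∑' j, exp (-t * l j) * k (exp (-t * l j))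

noncomputable def gammaTransform (α : ℝ) (k : ℝ → ℝ) : ℝ :=
  ∫ y in Ioi 0, exp (-y) * k (exp (-y)) * y ^ (α - 1)

lemma exp_neg_mul_eval_exp_neg (P : ℝ[X]) (s : ℝ) :
    exp (-s) * P.eval (exp (-s)) =
      ∑ i ∈ Finset.range (P.natDegree + 1), P.coeff i * exp (-((i + 1) * s)) := by
  rw [eval_eq_sum_range, Finset.mul_sum]
  refine Finset.sum_congr rfl fun i _ => ?_
  rw [← exp_nat_mul, mul_left_comm, ← exp_add]
  congr 2
  ring

section HeatSum

variable {l : ℕ → ℝ} {t : ℝ}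

lemma heatSum_eval (hsum : ∀ t, 0 < t → Summable fun j => exp (-t * l j)) (ht : 0 < t)
    (P : ℝ[X]) :
    heatSum l P.eval t =
      ∑ i ∈ Finset.range (P.natDegree + 1), P.coeff i * ∑' j, exp (-((i + 1) * t) * l j) := by
  have hterm (j : ℕ) : exp (-t * l j) * P.eval (exp (-t * l j)) =
      ∑ i ∈ Finset.range (P.natDegree + 1), P.coeff i * exp (-((i + 1) * t) * l j) := by
    rw [neg_mul, exp_neg_mul_eval_exp_neg]
    simp only [neg_mul, mul_assoc]
  simp only [heatSum, hterm, ← tsum_mul_left]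
  refine Summable.tsum_finsetSum fun i _ => ?_
  exact (hsum (((i : ℝ) + 1) * t) (by positivity)).mul_left (P.coeff i)

lemma abs_heatSum_le {k : ℝ → ℝ} {M : ℝ} (hsum : Summable fun j => exp (-t * l j))
    (hk : ∀ j, |k (exp (-t * l j))| ≤ M) :
    |heatSum l k t| ≤ M * ∑' j, exp (-t * l j) := by
  rw [heatSum, ← Real.norm_eq_abs]
  refine tsum_of_norm_bounded (hsum.hasSum.mul_left M) fun j => ?_
  rw [norm_mul, norm_of_nonneg (exp_pos _).le, mul_comm]
  exact mul_le_mul_of_nonneg_right (hk j) (exp_pos _).le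

lemma heatSum_sub {k₁ k₂ : ℝ → ℝ} {s : Set ℝ} (hsum : Summable fun j => exp (-t * l j))
    (hs : IsCompact s) (hmem : ∀ j, exp (-t * l j) ∈ s)
    (hk₁ : ContinuousOn k₁ s) (hk₂ : ContinuousOn k₂ s) :
    heatSum l (k₁ - k₂) t = heatSum l k₁ t - heatSum l k₂ t := by
  have hsummable : ∀ k : ℝ → ℝ, ContinuousOn k s →
      Summable fun j => exp (-t * l j) * k (exp (-t * l j)) := fun k hk => by
    obtain ⟨M, hM⟩ := hs.exists_bound_of_continuousOn hk
    refine Summable.of_norm_bounded (hsum.mul_left M) fun j => ?_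
    rw [norm_mul, norm_of_nonneg (exp_pos _).le, mul_comm]
    exact mul_le_mul_of_nonneg_right (hM _ (hmem j)) (exp_pos _).le
  simp_rw [heatSum, Pi.sub_apply, mul_sub]
  exact (hsummable k₁ hk₁).tsum_sub (hsummable k₂ hk₂)

end HeatSum

noncomputable def ramp (a b x : ℝ) : ℝ := max 0 (min 1 ((x - a) / (b - a)))

section Ramp

variable {a b x : ℝ}

lemma continuous_ramp (a b : ℝ) : Continuous (ramp a b) := by
  unfold ramp
  fun_prop

lemma ramp_nonneg : 0 ≤ ramp a b x := le_max_left _ _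

lemma ramp_le_one : ramp a b x ≤ 1 := max_le zero_le_one (min_le_left _ _)

lemma ramp_of_le (hab : a ≤ b) (hx : x ≤ a) : ramp a b x = 0 :=
  max_eq_left (min_le_of_right_le (div_nonpos_of_nonpos_of_nonneg (by linarith) (by linarith)))

lemma ramp_of_ge (hab : a < b) (hx : b ≤ x) : ramp a b x = 1 := by
  rw [ramp, min_eq_left ((one_le_div (by linarith)).2 (by linarith)), max_eq_right zero_le_one]

lemma ramp_le_ite (hab : a ≤ b) : ramp a b x ≤ if a ≤ x then 1 else 0 := by
  split_ifs with hx
  · exact ramp_le_one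
  · exact (ramp_of_le hab (not_le.1 hx).le).le

lemma ite_le_ramp (hab : a < b) : (if b ≤ x then 1 else 0) ≤ ramp a b x := by
  split_ifs with hx
  · exact (ramp_of_ge hab hx).ge
  · exact ramp_nonneg

lemma mul_ramp_div_max (ha : 0 < a) (hab : a ≤ b) :
    x * (ramp a b x / max x a) = ramp a b x := by
  rcases le_total x a with h | h
  · rw [ramp_of_le hab h, zero_div, mul_zero]
  · rw [max_eq_left h, mul_div_cancel₀ _ (ha.trans_le h).ne']

lemma continuous_ramp_div_max (ha : 0 < a) : Continuous fun x => ramp a b x / max x a :=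
  (continuous_ramp a b).div (by fun_prop) fun x => (ha.trans_le (le_max_right x a)).ne'

end Ramp

section GammaTransform

variable {α : ℝ}

lemma gammaTransform_eval (hα : 0 < α) (P : ℝ[X]) :
    gammaTransform α P.eval =
      Gamma α * ∑ i ∈ Finset.range (P.natDegree + 1), P.coeff i / (i + 1) ^ α := by
  have hint (i : ℕ) : IntegrableOn (fun y => y ^ (α - 1) * exp (-((i + 1) * y))) (Ioi 0) := by
    have := integrableOn_rpow_mul_exp_neg_mul_rpow (s := α - 1) (b := (i : ℝ) + 1)
      (by linarith) one_pos (by positivity)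
    simpa only [rpow_one, neg_mul] using this
  simp_rw [gammaTransform, exp_neg_mul_eval_exp_neg, Finset.sum_mul, Finset.mul_sum]
  have hterm (i : ℕ) : ∫ y in Ioi 0, P.coeff i * exp (-((i + 1) * y)) * y ^ (α - 1) =
      Gamma α * (P.coeff i / (i + 1) ^ α) := by
    simp_rw [mul_assoc, mul_comm (exp _)]
    rw [integral_const_mul, integral_rpow_mul_exp_neg_mul_Ioi hα (by positivity), one_div,
      inv_rpow (by positivity)]
    ring
  rw [integral_finsetSum _ fun i _ => ?_]
  · exact Finset.sum_congr rfl fun i _ => hterm i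
  · simpa only [mul_assoc, mul_comm (exp _)] using (hint i).const_mul (P.coeff i)

lemma norm_gammaTransform_integrand_le {k : ℝ → ℝ} {M y : ℝ} (hk : ∀ x ∈ Icc 0 1, |k x| ≤ M)
    (hy : 0 < y) :
    ‖exp (-y) * k (exp (-y)) * y ^ (α - 1)‖ ≤ M * (exp (-y) * y ^ (α - 1)) := by
  rw [norm_mul, norm_mul, norm_of_nonneg (exp_pos _).le, norm_of_nonneg (rpow_nonneg hy.le _),
    mul_left_comm, ← mul_assoc]
  gcongr
  exact hk _ ⟨(exp_pos _).le, exp_le_one_iff.2 (by linarith)⟩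

lemma integrableOn_gammaTransform (hα : 0 < α) {k : ℝ → ℝ} (hk : ContinuousOn k (Icc 0 1)) :
    IntegrableOn (fun y => exp (-y) * k (exp (-y)) * y ^ (α - 1)) (Ioi 0) := by
  obtain ⟨M, hM⟩ := isCompact_Icc.exists_bound_of_continuousOn hk
  refine Integrable.mono' ((GammaIntegral_convergent hα).const_mul M) ?_ ?_
  · have hexp : MapsTo (fun y => exp (-y)) (Ioi 0) (Icc 0 1) := fun y (hy : 0 < y) =>
      ⟨(exp_pos _).le, exp_le_one_iff.2 (by linarith)⟩
    refine ContinuousOn.aestronglyMeasurable ?_ measurableSet_Ioi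
    refine ((Continuous.continuousOn (by fun_prop)).mul (hk.comp (by fun_prop) hexp)).mul ?_
    exact fun y hy => (continuousAt_rpow_const _ _ (Or.inl (ne_of_gt hy))).continuousWithinAt
  · exact (ae_restrict_iff' measurableSet_Ioi).2 (Eventually.of_forall fun y hy =>
      norm_gammaTransform_integrand_le hM hy)

lemma abs_gammaTransform_le (hα : 0 < α) {k : ℝ → ℝ} {M : ℝ} (hk : ∀ x ∈ Icc 0 1, |k x| ≤ M) :
    |gammaTransform α k| ≤ M * Gamma α := by
  rw [gammaTransform, ← norm_eq_abs, Gamma_eq_integral hα, ← integral_const_mul]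
  exact norm_integral_le_of_norm_le ((GammaIntegral_convergent hα).const_mul M)
    ((ae_restrict_iff' measurableSet_Ioi).2 (Eventually.of_forall fun y hy =>
      norm_gammaTransform_integrand_le hk hy))

lemma gammaTransform_sub (hα : 0 < α) {k₁ k₂ : ℝ → ℝ} (hk₁ : ContinuousOn k₁ (Icc 0 1))
    (hk₂ : ContinuousOn k₂ (Icc 0 1)) :
    gammaTransform α (k₁ - k₂) = gammaTransform α k₁ - gammaTransform α k₂ := by
  simp only [gammaTransform, Pi.sub_apply, mul_sub, sub_mul]
  exact integral_sub (integrableOn_gammaTransform hα hk₁) (integrableOn_gammaTransform hα hk₂)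

lemma integrableOn_indicator_Iic_rpow (hα : 0 < α) (c : ℝ) :
    IntegrableOn ((Iic c).indicator fun y => y ^ (α - 1)) (Ioi 0) := by
  rw [IntegrableOn, integrable_indicator_iff measurableSet_Iic, IntegrableOn,
    Measure.restrict_restrict measurableSet_Iic, inter_comm, Ioi_inter_Iic]
  exact (intervalIntegral.intervalIntegrable_rpow' (by linarith)).1

lemma integral_indicator_Iic_rpow (hα : 0 < α) {c : ℝ} (hc : 0 ≤ c) :
    ∫ y in Ioi 0, (Iic c).indicator (fun y => y ^ (α - 1)) y = c ^ α / α := by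
  rw [setIntegral_indicator measurableSet_Iic, Ioi_inter_Iic,
    ← intervalIntegral.integral_of_le hc, integral_rpow (Or.inl (by linarith)), sub_add_cancel,
    zero_rpow hα.ne', sub_zero]

lemma indicator_Iic_rpow_eq (c y : ℝ) :
    (Iic c).indicator (fun y => y ^ (α - 1)) y =
      (if exp (-c) ≤ exp (-y) then 1 else 0) * y ^ (α - 1) := by
  simp [indicator_apply, exp_le_exp]

lemma gammaTransform_ramp_div_max_mem_Icc (hα : 0 < α) {c₁ c₂ : ℝ} (hc₁ : 0 ≤ c₁)
    (hc : c₁ < c₂) :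
    gammaTransform α (fun x => ramp (exp (-c₂)) (exp (-c₁)) x / max x (exp (-c₂))) ∈
      Icc (c₁ ^ α / α) (c₂ ^ α / α) := by
  have hab : exp (-c₂) < exp (-c₁) := exp_lt_exp.2 (by linarith)
  have hint := integrableOn_gammaTransform hα
    (continuous_ramp_div_max (b := exp (-c₁)) (exp_pos (-c₂))).continuousOn
  have hramp (y : ℝ) : exp (-y) * (ramp (exp (-c₂)) (exp (-c₁)) (exp (-y)) /
      max (exp (-y)) (exp (-c₂))) = ramp (exp (-c₂)) (exp (-c₁)) (exp (-y)) :=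
    mul_ramp_div_max (exp_pos _) hab.le
  simp only [gammaTransform, hramp] at hint ⊢
  constructor
  · rw [← integral_indicator_Iic_rpow hα hc₁]
    refine setIntegral_mono_on (integrableOn_indicator_Iic_rpow hα c₁) hint measurableSet_Ioi
      fun y (hy : 0 < y) => ?_
    rw [indicator_Iic_rpow_eq]
    gcongr
    exact ite_le_ramp hab
  · rw [← integral_indicator_Iic_rpow hα (hc₁.trans hc.le)]
    refine setIntegral_mono_on hint (integrableOn_indicator_Iic_rpow hα c₂) measurableSet_Ioi
      fun y (hy : 0 < y) => ?_
    rw [indicator_Iic_rpow_eq]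
    gcongr
    exact ramp_le_ite hab.le

end GammaTransform

section Counting

variable {l : ℕ → ℝ}

lemma finite_setOf_le (htop : Tendsto l atTop atTop) (x : ℝ) : {j | l j ≤ x}.Finite := by
  simpa [not_lt] using (Nat.cofinite_eq_atTop ▸ htop.eventually_gt_atTop x :
    ∀ᶠ j in cofinite, x < l j)

lemma summable_ite_le (htop : Tendsto l atTop atTop) (x : ℝ) :
    Summable fun j => if l j ≤ x then (1 : ℝ) else 0 :=
  summable_of_hasFiniteSupport <| (finite_setOf_le htop x).subset fun j hj => by
    by_contra h
    simp_all

lemma natCard_setOf_le_eq_tsum (htop : Tendsto l atTop atTop) (x : ℝ) :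
    (Nat.card {j | l j ≤ x} : ℝ) = ∑' j, if l j ≤ x then 1 else 0 := by
  classical
  have hfin := finite_setOf_le htop x
  rw [tsum_eq_sum (s := hfin.toFinset) fun j hj => by simp_all, Finset.sum_boole,
    Nat.card_eq_card_finite_toFinset hfin]
  congr 2
  ext j
  simp

lemma exp_neg_le_exp_neg_mul_iff {t c y : ℝ} (ht : 0 < t) :
    exp (-c) ≤ exp (-t * y) ↔ y ≤ c / t := by
  rw [exp_le_exp, le_div_iff₀ ht]
  constructor <;> intro h <;> linarith

lemma tsum_ramp_le_natCard (htop : Tendsto l atTop atTop) {t b : ℝ} (ht : 0 < t)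
    (hb : exp (-1) ≤ b) :
    ∑' j, ramp (exp (-1)) b (exp (-t * l j)) ≤ Nat.card {j | l j ≤ t⁻¹} := by
  have hle (j : ℕ) : ramp (exp (-1)) b (exp (-t * l j)) ≤ if l j ≤ t⁻¹ then 1 else 0 := by
    simpa only [exp_neg_le_exp_neg_mul_iff ht, one_div] using ramp_le_ite (x := exp (-t * l j)) hb
  rw [natCard_setOf_le_eq_tsum htop]
  exact Summable.tsum_le_tsum hle
    ((summable_ite_le htop _).of_nonneg_of_le (fun _ => ramp_nonneg) hle)
    (summable_ite_le htop _)

lemma natCard_le_tsum_ramp (htop : Tendsto l atTop atTop) {t c : ℝ} (ht : 0 < t) (hc : 1 < c) :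
    (Nat.card {j | l j ≤ t⁻¹} : ℝ) ≤ ∑' j, ramp (exp (-c)) (exp (-1)) (exp (-t * l j)) := by
  have hlt : exp (-c) < exp (-1) := exp_lt_exp.2 (by linarith)
  have hge (j : ℕ) :
      (if l j ≤ t⁻¹ then 1 else 0) ≤ ramp (exp (-c)) (exp (-1)) (exp (-t * l j)) := by
    simpa only [exp_neg_le_exp_neg_mul_iff ht, one_div] using ite_le_ramp (x := exp (-t * l j)) hlt
  have hle (j : ℕ) :
      ramp (exp (-c)) (exp (-1)) (exp (-t * l j)) ≤ if l j ≤ c / t then 1 else 0 := by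
    simpa only [exp_neg_le_exp_neg_mul_iff ht] using ramp_le_ite (x := exp (-t * l j)) hlt.le
  rw [natCard_setOf_le_eq_tsum htop]
  exact Summable.tsum_le_tsum hge (summable_ite_le htop _)
    ((summable_ite_le htop _).of_nonneg_of_le (fun _ => ramp_nonneg) hle)

end Counting

section Tauberian

variable {l : ℕ → ℝ} {α C : ℝ}

theorem tendsto_rpow_mul_heatSum_eval (hα : 0 < α)
    (hsum : ∀ t, 0 < t → Summable fun j => exp (-t * l j))
    (hθ : Tendsto (fun t => t ^ α * ∑' j, exp (-t * l j)) (𝓝[>] 0) (𝓝 C)) (P : ℝ[X]) :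
    Tendsto (fun t => t ^ α * heatSum l P.eval t) (𝓝[>] 0)
      (𝓝 (C / Gamma α * gammaTransform α P.eval)) := by
  have hlim : Tendsto (fun t => ∑ i ∈ Finset.range (P.natDegree + 1),
      P.coeff i * (t ^ α * ∑' j, exp (-((i + 1) * t) * l j))) (𝓝[>] 0)
      (𝓝 (∑ i ∈ Finset.range (P.natDegree + 1), P.coeff i * (C / (i + 1) ^ α))) :=
    tendsto_finsetSum _ fun i _ => (tendsto_rpow_mul_comp_const_mul
      (f := fun t => ∑' j, exp (-t * l j)) hθ (by positivity)).const_mul _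
  have hΓ : Gamma α ≠ 0 := (Gamma_pos_of_pos hα).ne'
  rw [gammaTransform_eval hα, ← mul_assoc, div_mul_cancel₀ _ hΓ, Finset.mul_sum]
  simp_rw [mul_div_left_comm C]
  refine hlim.congr' ?_
  filter_upwards [self_mem_nhdsWithin] with t ht
  simp_rw [heatSum_eval hsum ht, Finset.mul_sum, mul_left_comm]

theorem tendsto_rpow_mul_heatSum {b : ℝ} (hα : 0 < α) (hb : 0 ≤ b) (hl : ∀ j, -b ≤ l j)
    (hsum : ∀ t, 0 < t → Summable fun j => exp (-t * l j))
    (hθ : Tendsto (fun t => t ^ α * ∑' j, exp (-t * l j)) (𝓝[>] 0) (𝓝 C))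
    {k : ℝ → ℝ} (hk : ContinuousOn k (Icc 0 (exp b))) :
    Tendsto (fun t => t ^ α * heatSum l k t) (𝓝[>] 0)
      (𝓝 (C / Gamma α * gammaTransform α k)) := by
  have hΓ : 0 < Gamma α := Gamma_pos_of_pos hα
  have hsub : Icc (0 : ℝ) 1 ⊆ Icc 0 (exp b) := Icc_subset_Icc_right (one_le_exp hb)
  refine tendsto_of_forall_exists_approx fun ε hε => ?_
  set δ := ε / (|C| + 1)
  have hδ : 0 < δ := by positivity
  have hδε : δ * (|C| + 1) = ε := div_mul_cancel₀ _ (by positivity)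
  obtain ⟨P, hP⟩ := exists_polynomial_near_of_continuousOn 0 (exp b) k hk δ hδ
  have hPk : ∀ x ∈ Icc 0 (exp b), |(P.eval - k) x| ≤ δ := fun x hx => (hP x hx).le
  refine ⟨_, _, tendsto_rpow_mul_heatSum_eval hα hsum hθ P, ?_, ?_⟩
  · rw [← mul_sub, ← gammaTransform_sub hα P.continuous.continuousOn (hk.mono hsub), abs_mul,
      abs_div, abs_of_pos hΓ]
    calc |C| / Gamma α * |gammaTransform α (P.eval - k)| ≤ |C| / Gamma α * (δ * Gamma α) := by
          gcongr
          exact abs_gammaTransform_le hα fun x hx => hPk x (hsub hx)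
      _ = δ * |C| := by field_simp
      _ ≤ ε := by
          rw [← hδε]
          gcongr
          linarith
  · filter_upwards [Ioc_mem_nhdsGT one_pos,
      hθ.eventually (gt_mem_nhds (show C < |C| + 1 by linarith [le_abs_self C]))]
      with t ht hθt
    have hmem (j : ℕ) : exp (-t * l j) ∈ Icc 0 (exp b) :=
      ⟨(exp_pos _).le, exp_le_exp.2 (by nlinarith [hl j, ht.1, ht.2])⟩
    have htα : 0 < t ^ α := rpow_pos_of_pos ht.1 α
    rw [abs_sub_comm, ← mul_sub,
      ← heatSum_sub (hsum t ht.1) isCompact_Icc hmem P.continuous.continuousOn hk,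
      abs_mul, abs_of_pos htα]
    calc t ^ α * |heatSum l (P.eval - k) t| ≤ t ^ α * (δ * ∑' j, exp (-t * l j)) := by
          gcongr
          exact abs_heatSum_le (hsum t ht.1) fun j => hPk _ (hmem j)
      _ = δ * (t ^ α * ∑' j, exp (-t * l j)) := by ring
      _ ≤ ε := by rw [← hδε]; gcongr

theorem exists_tendsto_rpow_mul_tsum_ramp {b c₁ c₂ : ℝ} (hα : 0 < α) (hC : 0 ≤ C) (hb : 0 ≤ b)
    (hl : ∀ j, -b ≤ l j) (hsum : ∀ t, 0 < t → Summable fun j => exp (-t * l j))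
    (hθ : Tendsto (fun t => t ^ α * ∑' j, exp (-t * l j)) (𝓝[>] 0) (𝓝 C))
    (hc₁ : 0 ≤ c₁) (hc : c₁ < c₂) :
    ∃ Λ ∈ Icc (C * c₁ ^ α / Gamma (α + 1)) (C * c₂ ^ α / Gamma (α + 1)),
      Tendsto (fun t => t ^ α * ∑' j, ramp (exp (-c₂)) (exp (-c₁)) (exp (-t * l j))) (𝓝[>] 0)
        (𝓝 Λ) := by
  have hab : exp (-c₂) ≤ exp (-c₁) := exp_le_exp.2 (by linarith)
  have hscale (c : ℝ) : C * c ^ α / Gamma (α + 1) = C / Gamma α * (c ^ α / α) := by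
    rw [Gamma_add_one hα.ne']
    field_simp
  have hCΓ : 0 ≤ C / Gamma α := div_nonneg hC (Gamma_pos_of_pos hα).le
  obtain ⟨h₁, h₂⟩ := gammaTransform_ramp_div_max_mem_Icc hα hc₁ hc
  have hlim := tendsto_rpow_mul_heatSum hα hb hl hsum hθ
    (continuous_ramp_div_max (b := exp (-c₁)) (exp_pos (-c₂))).continuousOn
  refine ⟨_, ⟨?_, ?_⟩, hlim.congr fun t => ?_⟩
  · rw [hscale]
    exact mul_le_mul_of_nonneg_left h₁ hCΓ
  · rw [hscale]
    exact mul_le_mul_of_nonneg_left h₂ hCΓ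
  · simp only [heatSum, mul_ramp_div_max (exp_pos _) hab]

theorem tendsto_rpow_mul_natCard (hα : 0 < α) (htop : Tendsto l atTop atTop)
    (hsum : ∀ t, 0 < t → Summable fun j => exp (-t * l j))
    (hθ : Tendsto (fun t => t ^ α * ∑' j, exp (-t * l j)) (𝓝[>] 0) (𝓝 C)) :
    Tendsto (fun t => t ^ α * (Nat.card {j | l j ≤ t⁻¹} : ℝ)) (𝓝[>] 0)
      (𝓝 (C / Gamma (α + 1))) := by
  have hC : 0 ≤ C := ge_of_tendsto hθ <| eventually_nhdsWithin_of_forall fun t (ht : 0 < t) =>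
    mul_nonneg (rpow_nonneg ht.le _) (tsum_nonneg fun j => (exp_pos _).le)
  obtain ⟨m, hm⟩ := bddBelow_range_of_tendsto_atTop_atTop htop
  have hl (j : ℕ) : -max (-m) 0 ≤ l j := by
    have := hm (mem_range_self j)
    simp only [neg_le]
    exact le_max_of_le_left (by linarith)
  have hlim : Tendsto (fun c => C * c ^ α / Gamma (α + 1)) (𝓝 1) (𝓝 (C / Gamma (α + 1))) := by
    simpa using ((continuousAt_rpow_const 1 α (Or.inl one_ne_zero)).tendsto.const_mul C).div_const
      (Gamma (α + 1))
  refine tendsto_order.2 ⟨fun L hL => ?_, fun L hL => ?_⟩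
  · obtain ⟨c, hcL, hc⟩ := (((hlim.mono_left nhdsWithin_le_nhds).eventually (lt_mem_nhds hL)).and
      (Ioo_mem_nhdsLT zero_lt_one)).exists
    obtain ⟨Λ, hΛ, hlimΛ⟩ := exists_tendsto_rpow_mul_tsum_ramp hα hC (le_max_right _ 0) hl hsum hθ
      hc.1.le hc.2
    filter_upwards [hlimΛ.eventually (lt_mem_nhds (hcL.trans_le hΛ.1)), self_mem_nhdsWithin]
      with t ht (ht0 : 0 < t)
    refine ht.trans_le (mul_le_mul_of_nonneg_left ?_ (rpow_nonneg ht0.le _))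
    exact tsum_ramp_le_natCard htop ht0 (exp_le_exp.2 (by linarith [hc.2]))
  · obtain ⟨c, hcL, hc⟩ := (((hlim.mono_left nhdsWithin_le_nhds).eventually (gt_mem_nhds hL)).and
      (Ioo_mem_nhdsGT one_lt_two)).exists
    obtain ⟨Λ, hΛ, hlimΛ⟩ := exists_tendsto_rpow_mul_tsum_ramp hα hC (le_max_right _ 0) hl hsum hθ
      zero_le_one hc.1
    filter_upwards [hlimΛ.eventually (gt_mem_nhds (hΛ.2.trans_lt hcL)), self_mem_nhdsWithin]
      with t ht (ht0 : 0 < t)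
    refine (mul_le_mul_of_nonneg_left ?_ (rpow_nonneg ht0.le _)).trans_lt ht
    exact natCard_le_tsum_ramp htop ht0 hc.1

end Tauberian

end Karamata

open Karamata

theorem karamata_counting_of_heat_trace_general
    (l : ℕ → ℝ) (htop : Tendsto l atTop atTop)
    (hsum : ∀ t : ℝ, 0 < t → Summable fun k => Real.exp (-t * l k))
    (α C : ℝ) (hα : 0 < α)
    (hθ : (fun t : ℝ => (∑' k, Real.exp (-t * l k)) - C * t ^ (-α))
        =o[nhdsWithin 0 (Set.Ioi 0)] fun t : ℝ => t ^ (-α)) :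
    (fun x : ℝ => (Nat.card {k : ℕ | l k ≤ x} : ℝ) - (C / Real.Gamma (α + 1)) * x ^ α)
      =o[atTop] fun x : ℝ => x ^ α := by
  have hN := (tendsto_rpow_mul_natCard hα htop hsum (tendsto_rpow_mul_of_isLittleO hθ)).comp
    tendsto_inv_atTop_nhdsGT_zero
  refine isLittleO_sub_mul_rpow_of_tendsto (hN.congr' ?_)
  filter_upwards [eventually_gt_atTop 0] with x hx
  simp [inv_rpow hx.le, rpow_neg hx.le]

/-- **Karamata's Tauberian theorem.**  Let `(λ k)` be a nondecreasing sequence of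
reals tending to `∞` whose heat trace `θ t = Σ' k, exp (−t λ k)` converges for every `t > 0`, and
let `N λ = #{k : λ k ≤ λ}` be the counting function.  If `θ(t) = C t^(−α) + o(t^(−α))` as
`t → 0⁺` (with `α, C > 0`), then `N(λ) = (C / Γ(α+1)) λ^α + o(λ^α)` as `λ → ∞`. -/
theorem karamata_counting_of_heat_trace
    (l : ℕ → ℝ) (hmono : Monotone l) (htop : Tendsto l atTop atTop)
    (hsum : ∀ t : ℝ, 0 < t → Summable fun k => Real.exp (-t * l k))
    (α C : ℝ) (hα : 0 < α) (hC : 0 < C)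
    (hθ : (fun t : ℝ => (∑' k, Real.exp (-t * l k)) - C * t ^ (-α))
        =o[nhdsWithin 0 (Set.Ioi 0)] fun t : ℝ => t ^ (-α)) :
    (fun x : ℝ => (Nat.card {k : ℕ | l k ≤ x} : ℝ) - (C / Real.Gamma (α + 1)) * x ^ α)
      =o[atTop] fun x : ℝ => x ^ α :=
  karamata_counting_of_heat_trace_general l htop hsum α C hα hθ
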